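/- Let m = m_1 · m_2 with gcd(m_1,m_2) = 1 and n > 1. Then the matrix B_{n,m} is equal, up to a simultaneous permutation of rows and columns, to the tensor (Kronecker) product B_{n,m_1} ⊗ B_{n,m_2}. -/
import Mathlib

open scoped Classical

def Primitive {m n : ℕ} (u : Fin n → ZMod m) : Prop :=
  Nat.gcd (Finset.univ.gcd fun i => (u i).val) m = 1

def assoc {m n : ℕ} (u v : Fin n → ZMod m) : Prop :=
  ∃ lam : (ZMod m)ˣ, v = fun i => (lam : ZMod m) * u i

def projSetoid (m n : ℕ) : Setoid {u : Fin n → ZMod m // Primitive u} where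
  r u v := assoc u.1 v.1
  iseqv := by
    refine ⟨fun u => ⟨1, by simp⟩, ?_, ?_⟩
    · rintro u v ⟨l, h⟩
      refine ⟨l⁻¹, ?_⟩
      funext i
      simp [h, ← mul_assoc]
    · rintro u v w ⟨l, hl⟩ ⟨k, hk⟩
      refine ⟨k * l, ?_⟩
      funext i
      simp [hk, hl, mul_assoc]

abbrev ProjPt (m n : ℕ) := Quotient (projSetoid m n)

noncomputable def theta (n m : ℕ) : ℕ := Nat.card (ProjPt m n)

def orthoPt (m n : ℕ) (U W : ProjPt m n) : Prop :=
  ∀ (u w : {x : Fin n → ZMod m // Primitive x}),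
    Quotient.mk (projSetoid m n) u = U → Quotient.mk (projSetoid m n) w = W →
      ∑ i, u.1 i * w.1 i = 0

noncomputable def Bmat (m n : ℕ) : Matrix (ProjPt m n) (ProjPt m n) ℚ :=
  fun U V => (Nat.card {W : ProjPt m n // orthoPt m n U W ∧ orthoPt m n V W} : ℚ)

noncomputable def nuVal (p e : ℕ) (x : ZMod (p^e)) : ℕ := if x = 0 then e else padicValNat p x.val

noncomputable def nuXi (p e : ℕ) {n : ℕ} (u v : Fin n → ZMod (p^e)) : ℕ :=
  sInf {k | ∃ i j : Fin n, k = nuVal p e (u i * v j - u j * v i)}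

noncomputable def red (p e : ℕ) {n : ℕ} (u : Fin n → ZMod (p^e)) : Fin n → ZMod (p^(e-1)) :=
  fun i => ZMod.castHom (pow_dvd_pow p (Nat.sub_le e 1)) (ZMod (p^(e-1))) (u i)

noncomputable def eigMult {ι : Type*} [Fintype ι] (B : Matrix ι ι ℚ) (lam : ℚ) : ℕ :=
  Module.finrank ℚ (LinearMap.ker (B.mulVecLin - lam • (LinearMap.id : (ι → ℚ) →ₗ[ℚ] (ι → ℚ))))

/-! ### Auxiliary machinery -/

section Aux

lemma my_castHom_eq_zero_iff {p m : ℕ} [NeZero m] (hp : p ∣ m) (x : ZMod m) :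
    ZMod.castHom hp (ZMod p) x = 0 ↔ p ∣ x.val := by
  rw [ZMod.castHom_apply, ← ZMod.natCast_val, ZMod.natCast_eq_zero_iff]

lemma my_primitive_iff {m n : ℕ} [NeZero m] (u : Fin n → ZMod m) :
    Primitive u ↔ ∀ p : ℕ, p.Prime → ∀ hp : p ∣ m, ∃ i, ZMod.castHom hp (ZMod p) (u i) ≠ 0 := by
  constructor
  · intro h p pp hpm
    by_contra hc
    push_neg at hc
    have hg : p ∣ Finset.univ.gcd fun i => (u i).val :=
      Finset.dvd_gcd fun i _ => (my_castHom_eq_zero_iff hpm (u i)).1 (hc i)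
    have hp1 : p ∣ 1 := h ▸ Nat.dvd_gcd hg hpm
    exact pp.ne_one (Nat.dvd_one.mp hp1)
  · intro h
    by_contra hc
    obtain ⟨p, pp, hpd⟩ := Nat.exists_prime_and_dvd hc
    have hpm : p ∣ m := hpd.trans (Nat.gcd_dvd_right _ _)
    have hpg : p ∣ Finset.univ.gcd fun i => (u i).val := hpd.trans (Nat.gcd_dvd_left _ _)
    obtain ⟨i, hi⟩ := h p pp hpm
    exact hi ((my_castHom_eq_zero_iff hpm (u i)).2 (hpg.trans (Finset.gcd_dvd (Finset.mem_univ i))))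

variable {m₁ m₂ : ℕ} [NeZero m₁] [NeZero m₂] (hco : Nat.Coprime m₁ m₂)

instance : NeZero (m₁ * m₂) := ⟨mul_ne_zero (NeZero.ne m₁) (NeZero.ne m₂)⟩

noncomputable def crt : ZMod (m₁ * m₂) ≃+* ZMod m₁ × ZMod m₂ := ZMod.chineseRemainder hco

lemma crt_fst (x : ZMod (m₁ * m₂)) :
    (crt hco x).1 = ZMod.castHom (dvd_mul_right m₁ m₂) (ZMod m₁) x :=
  RingHom.congr_fun
    (Subsingleton.elim ((RingHom.fst (ZMod m₁) (ZMod m₂)).comp (crt hco).toRingHom)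
      (ZMod.castHom (dvd_mul_right m₁ m₂) (ZMod m₁))) x

lemma crt_snd (x : ZMod (m₁ * m₂)) :
    (crt hco x).2 = ZMod.castHom (dvd_mul_left m₂ m₁) (ZMod m₂) x :=
  RingHom.congr_fun
    (Subsingleton.elim ((RingHom.snd (ZMod m₁) (ZMod m₂)).comp (crt hco).toRingHom)
      (ZMod.castHom (dvd_mul_left m₂ m₁) (ZMod m₂))) x

lemma cast_crt_fst {p : ℕ} (hp : p ∣ m₁) (x : ZMod (m₁ * m₂)) :
    ZMod.castHom hp (ZMod p) (crt hco x).1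
      = ZMod.castHom (hp.trans (dvd_mul_right m₁ m₂)) (ZMod p) x := by
  rw [crt_fst, ← ZMod.castHom_comp hp (dvd_mul_right m₁ m₂)]; rfl

lemma cast_crt_snd {p : ℕ} (hp : p ∣ m₂) (x : ZMod (m₁ * m₂)) :
    ZMod.castHom hp (ZMod p) (crt hco x).2
      = ZMod.castHom (hp.trans (dvd_mul_left m₂ m₁)) (ZMod p) x := by
  rw [crt_snd, ← ZMod.castHom_comp hp (dvd_mul_left m₂ m₁)]; rfl

variable {n : ℕ}

lemma prim_split (u : Fin n → ZMod (m₁ * m₂)) :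
    Primitive u ↔ Primitive (fun i => (crt hco (u i)).1) ∧ Primitive (fun i => (crt hco (u i)).2) := by
  rw [my_primitive_iff, my_primitive_iff, my_primitive_iff]
  constructor
  · intro h
    constructor
    · intro p pp hp
      obtain ⟨i, hi⟩ := h p pp (hp.trans (dvd_mul_right m₁ m₂))
      exact ⟨i, by rwa [cast_crt_fst]⟩
    · intro p pp hp
      obtain ⟨i, hi⟩ := h p pp (hp.trans (dvd_mul_left m₂ m₁))
      exact ⟨i, by rwa [cast_crt_snd]⟩
  · rintro ⟨h1, h2⟩ p pp hp
    rcases (Nat.Prime.dvd_mul pp).1 hp with hp1 | hp2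
    · obtain ⟨i, hi⟩ := h1 p pp hp1
      refine ⟨i, ?_⟩
      rwa [cast_crt_fst hco hp1 (u i)] at hi
    · obtain ⟨i, hi⟩ := h2 p pp hp2
      refine ⟨i, ?_⟩
      rwa [cast_crt_snd hco hp2 (u i)] at hi

lemma assoc_split (u v : Fin n → ZMod (m₁ * m₂)) :
    assoc u v ↔ assoc (fun i => (crt hco (u i)).1) (fun i => (crt hco (v i)).1)
      ∧ assoc (fun i => (crt hco (u i)).2) (fun i => (crt hco (v i)).2) := by
  constructor
  · rintro ⟨l, hl⟩
    constructor
    · refine ⟨Units.map ((RingHom.fst (ZMod m₁) (ZMod m₂)).comp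
        (crt hco).toRingHom).toMonoidHom l, ?_⟩
      funext i
      simp [hl]
    · refine ⟨Units.map ((RingHom.snd (ZMod m₁) (ZMod m₂)).comp
        (crt hco).toRingHom).toMonoidHom l, ?_⟩
      funext i
      simp [hl]
  · rintro ⟨⟨l₁, hl₁⟩, ⟨l₂, hl₂⟩⟩
    refine ⟨Units.map (crt hco).symm.toRingHom.toMonoidHom
      ⟨((l₁ : ZMod m₁), (l₂ : ZMod m₂)), ((l₁⁻¹ : (ZMod m₁)ˣ), (l₂⁻¹ : (ZMod m₂)ˣ)),
        by ext <;> simp, by ext <;> simp⟩, ?_⟩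
    funext i
    have h1 : (crt hco (v i)).1 = (l₁ : ZMod m₁) * (crt hco (u i)).1 := congrFun hl₁ i
    have h2 : (crt hco (v i)).2 = (l₂ : ZMod m₂) * (crt hco (u i)).2 := congrFun hl₂ i
    have : v i = (crt hco).symm (((l₁ : ZMod m₁), (l₂ : ZMod m₂)) * crt hco (u i)) := by
      rw [← (crt hco).symm_apply_apply (v i)]
      congr 1
      rw [Prod.mk_mul_mk]
      exact Prod.ext h1 h2
    rw [this, map_mul, (crt hco).symm_apply_apply]
    rfl

lemma sum_split (u w : Fin n → ZMod (m₁ * m₂)) :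
    ∑ i, u i * w i = 0 ↔
      (∑ i, (crt hco (u i)).1 * (crt hco (w i)).1 = 0
        ∧ ∑ i, (crt hco (u i)).2 * (crt hco (w i)).2 = 0) := by
  rw [← (crt hco).injective.eq_iff, map_sum, map_zero]
  simp only [map_mul]
  rw [Prod.ext_iff]
  constructor <;> intro h <;>
    simpa [Prod.fst_sum, Prod.snd_sum, Prod.fst_mul, Prod.snd_mul] using h

end Aux

/-! ### ortho characterization -/

lemma orthoPt_iff {m n : ℕ} (u w : {x : Fin n → ZMod m // Primitive x}) :
    orthoPt m n (Quotient.mk (projSetoid m n) u) (Quotient.mk (projSetoid m n) w)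
      ↔ ∑ i, u.1 i * w.1 i = 0 := by
  constructor
  · intro h; exact h u w rfl rfl
  · intro h u' w' hu hw
    obtain ⟨l, hl⟩ : assoc u'.1 u.1 := Quotient.exact hu
    obtain ⟨k, hk⟩ : assoc w'.1 w.1 := Quotient.exact hw
    simp only [hl, hk] at h
    have h2 : ((l : ZMod m) * (k : ZMod m)) * ∑ i, u'.1 i * w'.1 i = 0 := by
      rw [Finset.mul_sum]
      calc ∑ i, (l : ZMod m) * (k : ZMod m) * (u'.1 i * w'.1 i)
          = ∑ i, ((l : ZMod m) * u'.1 i) * ((k : ZMod m) * w'.1 i) :=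
            Finset.sum_congr rfl fun i _ => by ring
        _ = 0 := h
    have lk : ((l * k : (ZMod m)ˣ) : ZMod m) * ∑ i, u'.1 i * w'.1 i = 0 := by
      rw [Units.val_mul]; exact h2
    exact (Units.mul_right_eq_zero (l * k)).mp lk

section Main

variable {m₁ m₂ n : ℕ} [NeZero m₁] [NeZero m₂] (hco : Nat.Coprime m₁ m₂)

noncomputable def splitSub (u : {x : Fin n → ZMod (m₁ * m₂) // Primitive x}) :
    {x : Fin n → ZMod m₁ // Primitive x} × {x : Fin n → ZMod m₂ // Primitive x} :=
  (⟨fun i => (crt hco (u.1 i)).1, ((prim_split hco u.1).1 u.2).1⟩,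
   ⟨fun i => (crt hco (u.1 i)).2, ((prim_split hco u.1).1 u.2).2⟩)

noncomputable def combSub (a : {x : Fin n → ZMod m₁ // Primitive x})
    (b : {x : Fin n → ZMod m₂ // Primitive x}) : {x : Fin n → ZMod (m₁ * m₂) // Primitive x} :=
  ⟨fun i => (crt hco).symm (a.1 i, b.1 i), by
    rw [prim_split hco]
    constructor
    · convert a.2 using 2 with i
      simp [(crt hco).apply_symm_apply]
    · convert b.2 using 2 with i
      simp [(crt hco).apply_symm_apply]⟩

lemma combSub_fst (a : {x : Fin n → ZMod m₁ // Primitive x})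
    (b : {x : Fin n → ZMod m₂ // Primitive x}) :
    (fun i => (crt hco ((combSub hco a b).1 i)).1) = a.1 := by
  funext i; simp [combSub]

lemma combSub_snd (a : {x : Fin n → ZMod m₁ // Primitive x})
    (b : {x : Fin n → ZMod m₂ // Primitive x}) :
    (fun i => (crt hco ((combSub hco a b).1 i)).2) = b.1 := by
  funext i; simp [combSub]

lemma splitSub_combSub (a : {x : Fin n → ZMod m₁ // Primitive x})
    (b : {x : Fin n → ZMod m₂ // Primitive x}) :
    splitSub hco (combSub hco a b) = (a, b) := by
  refine Prod.ext (Subtype.ext ?_) (Subtype.ext ?_)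
  · exact combSub_fst hco a b
  · exact combSub_snd hco a b

lemma combSub_splitSub (u : {x : Fin n → ZMod (m₁ * m₂) // Primitive x}) :
    combSub hco (splitSub hco u).1 (splitSub hco u).2 = u := by
  apply Subtype.ext
  funext i
  exact (crt hco).symm_apply_apply (u.1 i)

noncomputable def sigmaEquiv : ProjPt (m₁ * m₂) n ≃ ProjPt m₁ n × ProjPt m₂ n where
  toFun := Quotient.lift
    (fun u => (Quotient.mk (projSetoid m₁ n) (splitSub hco u).1,
               Quotient.mk (projSetoid m₂ n) (splitSub hco u).2))
    (by
      intro u v huv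
      obtain ⟨ha, hb⟩ := (assoc_split hco u.1 v.1).1 huv
      exact Prod.ext (Quotient.sound ha) (Quotient.sound hb))
  invFun P := Quotient.lift₂
    (fun a b => Quotient.mk (projSetoid (m₁ * m₂) n) (combSub hco a b))
    (by
      intro a b a' b' ha hb
      apply Quotient.sound
      show assoc _ _
      rw [assoc_split hco, combSub_fst hco, combSub_fst hco, combSub_snd hco, combSub_snd hco]
      exact ⟨ha, hb⟩)
    P.1 P.2
  left_inv := by
    refine Quotient.ind fun u => ?_
    show Quotient.mk _ (combSub hco (splitSub hco u).1 (splitSub hco u).2) = _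
    rw [combSub_splitSub hco u]
  right_inv := by
    rintro ⟨A, B⟩
    induction A using Quotient.ind with | _ a =>
    induction B using Quotient.ind with | _ b =>
    show (Quotient.mk _ (splitSub hco (combSub hco a b)).1,
          Quotient.mk _ (splitSub hco (combSub hco a b)).2) = _
    rw [splitSub_combSub hco a b]

lemma ortho_transfer (U W : ProjPt (m₁ * m₂) n) :
    orthoPt (m₁ * m₂) n U W ↔
      orthoPt m₁ n (sigmaEquiv hco U).1 (sigmaEquiv hco W).1
        ∧ orthoPt m₂ n (sigmaEquiv hco U).2 (sigmaEquiv hco W).2 := by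
  induction U using Quotient.ind with | _ u =>
  induction W using Quotient.ind with | _ w =>
  show orthoPt _ _ (Quotient.mk _ u) (Quotient.mk _ w) ↔ _
  rw [orthoPt_iff]
  show _ ↔ orthoPt m₁ n (Quotient.mk _ (splitSub hco u).1) (Quotient.mk _ (splitSub hco w).1) ∧
    orthoPt m₂ n (Quotient.mk _ (splitSub hco u).2) (Quotient.mk _ (splitSub hco w).2)
  rw [orthoPt_iff, orthoPt_iff]
  exact sum_split hco u.1 w.1

end Main

open Kronecker in
theorem stmt14 (m₁ m₂ n : ℕ) (h1 : 1 < m₁) (h2 : 1 < m₂)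
    (hco : Nat.Coprime m₁ m₂) (hn : 1 < n) :
    ∃ σ : ProjPt (m₁ * m₂) n ≃ ProjPt m₁ n × ProjPt m₂ n,
      ∀ U V, Bmat (m₁ * m₂) n U V = (Bmat m₁ n ⊗ₖ Bmat m₂ n) (σ U) (σ V) := by
  haveI : NeZero m₁ := ⟨by omega⟩
  haveI : NeZero m₂ := ⟨by omega⟩
  refine ⟨sigmaEquiv hco, fun U V => ?_⟩
  rw [Matrix.kroneckerMap_apply]
  unfold Bmat
  rw [← Nat.cast_mul, ← Nat.card_prod]
  congr 1
  apply Nat.card_congr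
  have e1 : {W : ProjPt (m₁ * m₂) n // orthoPt (m₁ * m₂) n U W ∧ orthoPt (m₁ * m₂) n V W} ≃
      {W : ProjPt m₁ n × ProjPt m₂ n //
        (orthoPt m₁ n (sigmaEquiv hco U).1 W.1 ∧ orthoPt m₁ n (sigmaEquiv hco V).1 W.1) ∧
        (orthoPt m₂ n (sigmaEquiv hco U).2 W.2 ∧ orthoPt m₂ n (sigmaEquiv hco V).2 W.2)} :=
    Equiv.subtypeEquiv (sigmaEquiv hco) (fun W => by
      rw [ortho_transfer hco U W, ortho_transfer hco V W]; tauto)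
  exact e1.trans (Equiv.subtypeProdEquivProd
    (p := fun W => orthoPt m₁ n (sigmaEquiv hco U).1 W ∧ orthoPt m₁ n (sigmaEquiv hco V).1 W)
    (q := fun W => orthoPt m₂ n (sigmaEquiv hco U).2 W ∧ orthoPt m₂ n (sigmaEquiv hco V).2 W))
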